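/- Let τ be a correct compositional translation from SYNCSIMPLE to LOCKSIMPLE_{2,IS} of blocking type (P_1P_1, P_2P_2). Then the prefix of τ(!) cannot be of the form T_1^+ T_2 nor of the form T_2^+ T_1 (a nonempty block of one take symbol followed by the other take symbol), for any initial store. -/

import Mathlib

/-- Symbols of SYNCSIMPLE: `!` (bang) and `?` (ques). -/
inductive SSym | bang | ques
deriving DecidableEq

/-- A SYNCSIMPLE subprocess: a string over {!,?} ending with `0` (false) or `✓` (true). -/
abbrev SSub := List SSym × Bool

/-- A SYNCSIMPLE process: a multiset of subprocesses. -/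
abbrev SProc := Multiset SSub

/-- The SYS reduction: a leading `!` and a leading `?` of two subprocesses are consumed. -/
def SysStep (P Q : SProc) : Prop :=
  ∃ (u1 u2 : List SSym) (b1 b2 : Bool) (R : SProc),
    P = (SSym.bang :: u1, b1) ::ₘ (SSym.ques :: u2, b2) ::ₘ R ∧
    Q = (u1, b1) ::ₘ (u2, b2) ::ₘ R

/-- A process is successful if it contains the subprocess `✓`. -/
def SSuccessful (P : SProc) : Prop := (([], true) : SSub) ∈ P

def SMayConv (P : SProc) : Prop :=
  ∃ Q, Relation.ReflTransGen SysStep P Q ∧ SSuccessful Q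

def SMustConv (P : SProc) : Prop :=
  ∀ Q, Relation.ReflTransGen SysStep P Q → SMayConv Q

/-- Lock operations: put `P_i` and take `T_i`. -/
inductive LOp | put | take
deriving DecidableEq

abbrev LSym (k : ℕ) := LOp × Fin k
abbrev LSub (k : ℕ) := List (LSym k) × Bool
abbrev LProc (k : ℕ) := Multiset (LSub k)
/-- The store of `k` locks: `true` = full (■), `false` = empty (□). -/
abbrev Store (k : ℕ) := Fin k → Bool

/-- LOCKSIMPLE step: `P_i` fills an empty lock `i` (blocks if full);
    `T_i` empties lock `i` and never blocks. -/
def LockStep {k : ℕ} : (LProc k × Store k) → (LProc k × Store k) → Prop :=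
  fun s t => ∃ (i : Fin k) (u : List (LSym k)) (b : Bool) (R : LProc k),
    ((s.1 = ((LOp.put, i) :: u, b) ::ₘ R ∧ s.2 i = false ∧
      t.1 = (u, b) ::ₘ R ∧ t.2 = Function.update s.2 i true) ∨
     (s.1 = ((LOp.take, i) :: u, b) ::ₘ R ∧
      t.1 = (u, b) ::ₘ R ∧ t.2 = Function.update s.2 i false))

def LSuccessful {k : ℕ} (s : LProc k × Store k) : Prop := (([], true) : LSub k) ∈ s.1

def LMayConv {k : ℕ} (s : LProc k × Store k) : Prop :=
  ∃ t, Relation.ReflTransGen LockStep s t ∧ LSuccessful t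

def LMustConv {k : ℕ} (s : LProc k × Store k) : Prop :=
  ∀ t, Relation.ReflTransGen LockStep s t → LMayConv t

/-- The compositional translation determined by the strings `tb = τ(!)` and `tq = τ(?)`,
    applied to a subprocess. -/
def transSub {k : ℕ} (tb tq : List (LSym k)) (u : SSub) : LSub k :=
  (u.1.flatMap (fun c => match c with | SSym.bang => tb | SSym.ques => tq), u.2)

/-- The compositional translation applied to a process. -/
def transProc {k : ℕ} (tb tq : List (LSym k)) (P : SProc) : LProc k :=
  P.map (transSub tb tq)

/-- Correctness of the compositional translation `(tb, tq)` with initial store `IS`: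
    may- and must-convergence are preserved and reflected. -/
def Correct {k : ℕ} (IS : Store k) (tb tq : List (LSym k)) : Prop :=
  ∀ P : SProc,
    (SMayConv P ↔ LMayConv (transProc tb tq P, IS)) ∧
    (SMustConv P ↔ LMustConv (transProc tb tq P, IS))

/-- The solo execution of the string `s` from store `IS` reaches the point where
    `(put, i) :: rest` remains and deadlocks there since lock `i` is full. -/
def SoloBlocked {k : ℕ} (IS : Store k) (s : List (LSym k)) (i : Fin k)
    (rest : List (LSym k)) : Prop :=
  ∃ C : Store k,
    Relation.ReflTransGen LockStep (({(s, false)} : LProc k), IS)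
      (({((LOp.put, i) :: rest, false)} : LProc k), C) ∧
    C i = true

/-- Blocking type `P_i`: the blocking prefix is `R P_i` with `R` free of `P_i, T_i`. -/
def BlockingTypeP {k : ℕ} (IS : Store k) (s : List (LSym k)) (i : Fin k) : Prop :=
  ∃ r rest, s = r ++ (LOp.put, i) :: rest ∧ (∀ x ∈ r, x.2 ≠ i) ∧
    SoloBlocked IS s i rest

/-- Blocking type `P_i P_i`: the blocking prefix is `R₁ P_i R₂ P_i` with
    `R₂` free of `P_i, T_i`, deadlocking exactly before the last `P_i`. -/
def BlockingTypePP {k : ℕ} (IS : Store k) (s : List (LSym k)) (i : Fin k) : Prop :=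
  ∃ r1 r2 rest, s = r1 ++ (LOp.put, i) :: r2 ++ (LOp.put, i) :: rest ∧
    (∀ x ∈ r2, x.2 ≠ i) ∧ SoloBlocked IS s i rest

/-!
A copy of `τ(!)` ending in `✓` can always be run to completion in the presence of enough further
copies of `τ(!)`: whenever one of its puts `P_i` meets a full lock, a fresh copy executes its
leading takes up to `T_i`, which never block and empty lock `i`. So if `τ(!)` starts with a run of
takes mentioning both locks, the translation of `!✓ | ⋯ | !✓`, which can never succeed, reaches
success, contradicting correctness.
-/

variable {k : ℕ}

theorem LockStep.take_head (i : Fin k) (u : List (LSym k)) (b : Bool) (R : LProc k)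
    (C : Store k) :
    LockStep (((LOp.take, i) :: u, b) ::ₘ R, C) ((u, b) ::ₘ R, Function.update C i false) :=
  ⟨i, u, b, R, Or.inr ⟨rfl, rfl, rfl⟩⟩

theorem LockStep.put_head (i : Fin k) (u : List (LSym k)) (b : Bool) (R : LProc k)
    {C : Store k} (h : C i = false) :
    LockStep (((LOp.put, i) :: u, b) ::ₘ R, C) ((u, b) ::ₘ R, Function.update C i true) :=
  ⟨i, u, b, R, Or.inl ⟨rfl, h, rfl, rfl⟩⟩

theorem LMayConv.head_reflTransGen {s t : LProc k × Store k}
    (hst : Relation.ReflTransGen LockStep s t) (ht : LMayConv t) : LMayConv s :=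
  let ⟨u, htu, hu⟩ := ht
  ⟨u, hst.trans htu, hu⟩

theorem exists_reflTransGen_takes_append {l : List (LSym k)} (hl : ∀ x ∈ l, x.1 = LOp.take)
    (u : List (LSym k)) (b : Bool) (R : LProc k) (C : Store k) :
    ∃ C', Relation.ReflTransGen LockStep ((l ++ u, b) ::ₘ R, C) ((u, b) ::ₘ R, C') := by
  induction l generalizing C with
  | nil => exact ⟨C, .refl⟩
  | cons x l ih =>
    obtain ⟨op, i⟩ := x
    obtain rfl : op = LOp.take := hl _ List.mem_cons_self
    obtain ⟨C', hC'⟩ :=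
      ih (fun y hy => hl y (List.mem_cons_of_mem _ hy)) (Function.update C i false)
    exact ⟨C', .head (LockStep.take_head i (l ++ u) b R C) hC'⟩

def TakeReachable (s : List (LSym k)) (i : Fin k) : Prop :=
  ∃ l r, s = l ++ (LOp.take, i) :: r ∧ ∀ x ∈ l, x.1 = LOp.take

theorem TakeReachable.exists_reflTransGen_empty {s : List (LSym k)} {i : Fin k}
    (hs : TakeReachable s i) (b : Bool) (R : LProc k) (C : Store k) :
    ∃ r C', Relation.ReflTransGen LockStep ((s, b) ::ₘ R, C) ((r, b) ::ₘ R, C') ∧ C' i = false := by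
  obtain ⟨l, r, rfl, hl⟩ := hs
  obtain ⟨C₁, hrun⟩ := exists_reflTransGen_takes_append hl ((LOp.take, i) :: r) b R C
  exact ⟨r, _, hrun.tail (LockStep.take_head i r b R C₁), Function.update_self ..⟩

/-- Each put of `s` consumes at most one of the `h` helper copies of `tb`. -/
theorem lMayConv_cons_replicate_add {tb : List (LSym k)} (htb : ∀ i, TakeReachable tb i)
    (b : Bool) (s : List (LSym k)) (h : ℕ) (J : LProc k) (C : Store k)
    (hs : s.countP (fun x => x.1 = LOp.put) ≤ h) :
    LMayConv ((s, true) ::ₘ (Multiset.replicate h (tb, b) + J), C) := by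
  induction s generalizing h J C with
  | nil => exact ⟨_, .refl, Multiset.mem_cons_self _ _⟩
  | cons x s ih =>
    obtain ⟨op, i⟩ := x
    cases op with
    | take =>
      refine .head_reflTransGen (.single (LockStep.take_head i s true _ C)) (ih h J _ ?_)
      simpa [List.countP_cons] using hs
    | put =>
      have hs' : s.countP (fun x => x.1 = LOp.put) + 1 ≤ h := by
        simpa [List.countP_cons] using hs
      cases hC : C i with
      | false =>
        exact .head_reflTransGen (.single (LockStep.put_head i s true _ hC)) (ih h J _ (by omega))
      | true =>
        obtain ⟨h, rfl⟩ : ∃ h', h = h' + 1 := ⟨h - 1, by omega⟩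
        set M := Multiset.replicate h (tb, b) + J
        obtain ⟨r, C', hrun, hC'⟩ :=
          (htb i).exists_reflTransGen_empty b (((LOp.put, i) :: s, true) ::ₘ M) C
        have hput := LockStep.put_head i s true ((r, b) ::ₘ M) hC'
        rw [Multiset.cons_swap (r, b) _ M] at hrun
        have hrest := ih h ((r, b) ::ₘ J) (Function.update C' i true) (by omega)
        rw [Multiset.add_cons] at hrest
        rw [Multiset.replicate_succ, Multiset.cons_add, Multiset.cons_swap]
        exact .head_reflTransGen (hrun.tail hput) hrest

theorem not_sMayConv_replicate_bang (m : ℕ) :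
    ¬ SMayConv (Multiset.replicate m (([SSym.bang], true) : SSub)) := by
  rintro ⟨Q, hQ, hsucc⟩
  rcases hQ.cases_head with rfl | ⟨Q', ⟨u₁, u₂, b₁, b₂, R, hP, -⟩, -⟩
  · simpa using Multiset.eq_of_mem_replicate hsucc
  · have hques : ((SSym.ques :: u₂, b₂) : SSub) ∈ Multiset.replicate m ([SSym.bang], true) := by
      simp [hP]
    simpa using Multiset.eq_of_mem_replicate hques

theorem not_correct_of_forall_takeReachable {IS : Store k} {tb tq : List (LSym k)}
    (htb : ∀ i, TakeReachable tb i) : ¬ Correct IS tb tq := by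
  intro hcorrect
  set n := tb.countP (fun x => x.1 = LOp.put)
  set P : SProc := Multiset.replicate (n + 1) ([SSym.bang], true)
  have htrans : transProc tb tq P = (tb, true) ::ₘ (Multiset.replicate n (tb, true) + 0) := by
    simp [P, transProc, transSub, Multiset.map_replicate, Multiset.replicate_succ]
  have hL : LMayConv (transProc tb tq P, IS) :=
    htrans ▸ lMayConv_cons_replicate_add htb true tb n 0 IS le_rfl
  exact not_sMayConv_replicate_bang (n + 1) (((hcorrect P).1).mpr hL)

theorem takeReachable_replicate_append {s rest : List (LSym k)} {n : ℕ} (hn : 0 < n)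
    {i j : Fin k} (hs : s = List.replicate n (LOp.take, i) ++ (LOp.take, j) :: rest) :
    TakeReachable s i ∧ TakeReachable s j := by
  obtain ⟨n, rfl⟩ := Nat.exists_eq_add_of_lt hn
  refine ⟨⟨[], List.replicate n (LOp.take, i) ++ (LOp.take, j) :: rest, ?_, by simp⟩,
    ⟨_, rest, hs, fun x hx => by rw [List.eq_of_mem_replicate hx]⟩⟩
  simpa [List.replicate_succ] using hs

/-- for a correct translation of blocking type `(P_1P_1, P_2P_2)`
(any initial store), the prefix of `τ(!)` can be neither `T_1⁺ T_2` nor `T_2⁺ T_1`. -/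
theorem send_prefix_not_takes :
    ∀ (IS : Store 2) (tb tq : List (LSym 2)),
      Correct IS tb tq →
      BlockingTypePP IS tb 0 → BlockingTypePP IS tq 1 →
      (¬ ∃ (n : ℕ) (rest : List (LSym 2)), 0 < n ∧
          tb = List.replicate n (LOp.take, (0 : Fin 2)) ++ (LOp.take, (1 : Fin 2)) :: rest) ∧
      (¬ ∃ (n : ℕ) (rest : List (LSym 2)), 0 < n ∧
          tb = List.replicate n (LOp.take, (1 : Fin 2)) ++ (LOp.take, (0 : Fin 2)) :: rest) := by
  intro IS tb tq hcorrect _ _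
  constructor
  · rintro ⟨n, rest, hn, htb⟩
    obtain ⟨h0, h1⟩ := takeReachable_replicate_append hn htb
    exact not_correct_of_forall_takeReachable (Fin.forall_fin_two.2 ⟨h0, h1⟩) hcorrect
  · rintro ⟨n, rest, hn, htb⟩
    obtain ⟨h1, h0⟩ := takeReachable_replicate_append hn htb
    exact not_correct_of_forall_takeReachable (Fin.forall_fin_two.2 ⟨h0, h1⟩) hcorrect
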